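/- arXiv:2108.00369 — 6 statements merged into one kernel-verified Lean document; each statement's English description precedes it below -/
import Mathlib

section
/- For s, t in ℤ² and a, b in a C*-algebra A with an action α of ℕ² by endomorphisms, the pointwise product of the functions φ_s(a) and φ_t(b) in ℓ^∞(ℤ², A) satisfies φ_s(a)·φ_t(b) = φ_{s∨t}(α_{(s∨t)−s}(a)·α_{(s∨t)−t}(b)), where s∨t is the coordinatewise supremum. -/
/- The algebra `ℓ^∞(ℤ², A)` is modelled as functions `ℤ × ℤ → A` with pointwise
operations.  `phi α s a` is the function `φ_s(a)` with `φ_s(a)(t) = α_{t-s}(a)`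
for `s ≤ t` and `0` otherwise. -/

variable {A : Type*} [NonUnitalNormedRing A] [StarRing A] [CStarRing A]
  [NormedSpace ℂ A] [IsScalarTower ℂ A A] [SMulCommClass ℂ A A] [StarModule ℂ A]
  [CompleteSpace A]

noncomputable def phi (α : ℕ × ℕ → (A →⋆ₙₐ[ℂ] A)) (s : ℤ × ℤ) (a : A) : ℤ × ℤ → A :=
  fun t => if s.1 ≤ t.1 ∧ s.2 ≤ t.2 then
    α ((t.1 - s.1).toNat, (t.2 - s.2).toNat) a else 0

/-- `φ_s(a) · φ_t(b) = φ_{s∨t}(α_{(s∨t)−s}(a) · α_{(s∨t)−t}(b))`. -/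
theorem stmt0 (α : ℕ × ℕ → (A →⋆ₙₐ[ℂ] A))
    (hα0 : ∀ a : A, α 0 a = a)
    (hα : ∀ x y : ℕ × ℕ, ∀ a : A, α (x + y) a = α x (α y a)) :
    ∀ (s t : ℤ × ℤ) (a b : A),
      phi α s a * phi α t b =
        phi α (s ⊔ t)
          (α (((s ⊔ t).1 - s.1).toNat, ((s ⊔ t).2 - s.2).toNat) a *
            α (((s ⊔ t).1 - t.1).toNat, ((s ⊔ t).2 - t.2).toNat) b) := by
  intro s t a b
  have hsup : (s ⊔ t) = (s.1 ⊔ t.1, s.2 ⊔ t.2) := rfl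
  funext u
  simp only [Pi.mul_apply, phi, hsup]
  by_cases hs : s.1 ≤ u.1 ∧ s.2 ≤ u.2
  · by_cases ht : t.1 ≤ u.1 ∧ t.2 ≤ u.2
    · have hst : s.1 ⊔ t.1 ≤ u.1 ∧ s.2 ⊔ t.2 ≤ u.2 := by
        constructor <;> simp [sup_le_iff] <;> omega
      rw [if_pos hs, if_pos ht, if_pos hst, map_mul, ← hα, ← hα]
      have h1 : ((u.1 - (s.1 ⊔ t.1)).toNat, (u.2 - (s.2 ⊔ t.2)).toNat) +
          ((s.1 ⊔ t.1 - s.1).toNat, (s.2 ⊔ t.2 - s.2).toNat) =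
          ((u.1 - s.1).toNat, (u.2 - s.2).toNat) := by
        have e1 := le_sup_left (a := s.1) (b := t.1)
        have e2 := le_sup_left (a := s.2) (b := t.2)
        ext <;> simp only [Prod.fst_add, Prod.snd_add] <;> omega
      have h2 : ((u.1 - (s.1 ⊔ t.1)).toNat, (u.2 - (s.2 ⊔ t.2)).toNat) +
          ((s.1 ⊔ t.1 - t.1).toNat, (s.2 ⊔ t.2 - t.2).toNat) =
          ((u.1 - t.1).toNat, (u.2 - t.2).toNat) := by
        have e1 := le_sup_right (a := s.1) (b := t.1)
        have e2 := le_sup_right (a := s.2) (b := t.2)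
        ext <;> simp only [Prod.fst_add, Prod.snd_add] <;> omega
      rw [h1, h2]
    · have hst : ¬ (s.1 ⊔ t.1 ≤ u.1 ∧ s.2 ⊔ t.2 ≤ u.2) := by
        simp only [sup_le_iff]; tauto
      rw [if_neg ht, if_neg hst, mul_zero]
  · have hst : ¬ (s.1 ⊔ t.1 ≤ u.1 ∧ s.2 ⊔ t.2 ≤ u.2) := by
      simp only [sup_le_iff]; tauto
    rw [if_neg hs, if_neg hst, zero_mul]
end

section
/- The maps Δ_{(m,n)} : A → ℓ^∞(ℤ, D) are *-homomorphisms satisfying Δ_{(m,n)}(a)* = Δ_{(m,n)}(a*) and Δ_{(m,n)}(a)·Δ_{(t,u)}(b) = Δ_{(m∨t, n∨u)}(δ_{(n∨u)−n}(γ_{(m∨t)−m}(a)) · δ_{(n∨u)−u}(γ_{(m∨t)−t}(b))); hence the C*-algebra generated by all Δ_{(m,n)}(a) equals the closed linear span of {Δ_{(m,n)}(a) : m, n ∈ ℤ, a ∈ A}. -/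
variable {A : Type*} [NonUnitalNormedRing A] [StarRing A] [CStarRing A]
  [NormedSpace ℂ A] [IsScalarTower ℂ A A] [SMulCommClass ℂ A A] [StarModule ℂ A]
  [CompleteSpace A]

noncomputable def Phi (δ : A →⋆ₙₐ[ℂ] A) (n : ℤ) (a : A) : ℤ → A :=
  fun m => if n ≤ m then (⇑δ)^[(m - n).toNat] a else 0

noncomputable def Delta (δ γ : A →⋆ₙₐ[ℂ] A) (p : ℤ × ℤ) (a : A) : ℤ → ℤ → A :=
  fun r => if p.1 ≤ r then Phi δ p.2 ((⇑γ)^[(r - p.1).toNat] a) else 0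

/-- the maps `Δ_{(m,n)}` are `*`-homomorphisms satisfying
`Δ_{(m,n)}(a)* = Δ_{(m,n)}(a*)` and the product formula
`Δ_{(m,n)}(a)·Δ_{(t,u)}(b) = Δ_{(m∨t,n∨u)}(δ_{(n∨u)−n}(γ_{(m∨t)−m}(a))·δ_{(n∨u)−u}(γ_{(m∨t)−t}(b)))`;
hence the (star-)algebra generated by all `Δ_{(m,n)}(a)` coincides, after closure,
with the closed linear span of `{Δ_{(m,n)}(a)}`. -/
theorem stmt4 (δ γ : A →⋆ₙₐ[ℂ] A) (hcomm : ∀ a : A, δ (γ a) = γ (δ a)) :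
    (∀ (m n : ℤ) (a : A),
      star (Delta δ γ (m, n) a) = Delta δ γ (m, n) (star a)) ∧
    (∀ (m n t u : ℤ) (a b : A),
      Delta δ γ (m, n) a * Delta δ γ (t, u) b =
        Delta δ γ (m ⊔ t, n ⊔ u)
          ((⇑δ)^[((n ⊔ u) - n).toNat] ((⇑γ)^[((m ⊔ t) - m).toNat] a) *
            (⇑δ)^[((n ⊔ u) - u).toNat] ((⇑γ)^[((m ⊔ t) - t).toNat] b))) ∧
    closure ((NonUnitalAlgebra.adjoin ℂ
        (Set.range fun q : (ℤ × ℤ) × A => Delta δ γ q.1 q.2) :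
        NonUnitalSubalgebra ℂ (ℤ → ℤ → A)) : Set (ℤ → ℤ → A)) =
      closure ((Submodule.span ℂ
        (Set.range fun q : (ℤ × ℤ) × A => Delta δ γ q.1 q.2) :
        Submodule ℂ (ℤ → ℤ → A)) : Set (ℤ → ℤ → A)) := by
  have iter_mul : ∀ (f : A →⋆ₙₐ[ℂ] A) (k : ℕ) (x y : A),
      (⇑f)^[k] (x * y) = (⇑f)^[k] x * (⇑f)^[k] y := by
    intro f k
    induction k with
    | zero => intro x y; rfl
    | succ n ih =>
      intro x y
      simp [Function.iterate_succ_apply', ih, map_mul]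
  have iter_star : ∀ (f : A →⋆ₙₐ[ℂ] A) (k : ℕ) (x : A),
      (⇑f)^[k] (star x) = star ((⇑f)^[k] x) := by
    intro f k
    induction k with
    | zero => intro x; rfl
    | succ n ih =>
      intro x
      simp [Function.iterate_succ_apply', ih, map_star]
  have hc : Function.Commute ⇑γ ⇑δ := fun x => (hcomm x).symm
  have comp_lemma : ∀ (p p' q q' : ℕ) (x : A),
      (⇑δ)^[p] ((⇑γ)^[q] ((⇑δ)^[p'] ((⇑γ)^[q'] x))) =
        (⇑δ)^[p + p'] ((⇑γ)^[q + q'] x) := by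
    intro p p' q q' x
    rw [((hc.iterate_left q).iterate_right p') ((⇑γ)^[q'] x),
      ← Function.iterate_add_apply, ← Function.iterate_add_apply]
  have hstar : ∀ (m n : ℤ) (a : A),
      star (Delta δ γ (m, n) a) = Delta δ γ (m, n) (star a) := by
    intro m n a
    funext r s
    simp only [Delta, Pi.star_apply]
    split_ifs with h
    · simp only [Phi]
      split_ifs <;> simp [iter_star]
    · simp
  have hmul : ∀ (m n t u : ℤ) (a b : A),
      Delta δ γ (m, n) a * Delta δ γ (t, u) b =
        Delta δ γ (m ⊔ t, n ⊔ u)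
          ((⇑δ)^[((n ⊔ u) - n).toNat] ((⇑γ)^[((m ⊔ t) - m).toNat] a) *
            (⇑δ)^[((n ⊔ u) - u).toNat] ((⇑γ)^[((m ⊔ t) - t).toNat] b)) := by
    intro m n t u a b
    funext r s
    have hm : m ≤ m ⊔ t := le_sup_left
    have ht : t ≤ m ⊔ t := le_sup_right
    have hn : n ≤ n ⊔ u := le_sup_left
    have hu : u ≤ n ⊔ u := le_sup_right
    simp only [Delta, Pi.mul_apply]
    by_cases h1 : m ⊔ t ≤ r
    · rw [if_pos h1, if_pos (hm.trans h1), if_pos (ht.trans h1)]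
      simp only [Phi]
      by_cases h2 : n ⊔ u ≤ s
      · rw [if_pos h2, if_pos (hn.trans h2), if_pos (hu.trans h2)]
        have e1 : (s - (n ⊔ u)).toNat + ((n ⊔ u) - n).toNat = (s - n).toNat := by omega
        have e2 : (s - (n ⊔ u)).toNat + ((n ⊔ u) - u).toNat = (s - u).toNat := by omega
        have e3 : (r - (m ⊔ t)).toNat + ((m ⊔ t) - m).toNat = (r - m).toNat := by omega
        have e4 : (r - (m ⊔ t)).toNat + ((m ⊔ t) - t).toNat = (r - t).toNat := by omega
        rw [iter_mul γ, iter_mul δ, comp_lemma, comp_lemma, e1, e2, e3, e4]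
      · rw [if_neg h2]
        rw [sup_le_iff, not_and_or] at h2
        rcases h2 with h2 | h2
        · rw [if_neg h2]; simp
        · rw [if_neg h2]; simp
    · rw [if_neg h1]
      rw [sup_le_iff, not_and_or] at h1
      rcases h1 with h1 | h1
      · rw [if_neg h1]; simp
      · rw [if_neg h1]; simp
  refine ⟨hstar, hmul, ?_⟩
  set S : Set (ℤ → ℤ → A) :=
    Set.range fun q : (ℤ × ℤ) × A => Delta δ γ q.1 q.2 with hS
  have hSmul : ∀ x ∈ S, ∀ y ∈ S, x * y ∈ S := by
    rintro x ⟨⟨⟨m, n⟩, a⟩, rfl⟩ y ⟨⟨⟨t, u⟩, b⟩, rfl⟩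
    exact ⟨⟨(m ⊔ t, n ⊔ u), _⟩, (hmul m n t u a b).symm⟩
  have hclos : (Subsemigroup.closure S : Set (ℤ → ℤ → A)) = S := by
    apply le_antisymm
    · exact (Subsemigroup.closure_le
        (S := ⟨S, fun hx hy => hSmul _ hx _ hy⟩)).mpr le_rfl
    · exact Subsemigroup.subset_closure
  have : (NonUnitalAlgebra.adjoin ℂ S : Set (ℤ → ℤ → A)) =
      (Submodule.span ℂ S : Set (ℤ → ℤ → A)) := by
    have := NonUnitalAlgebra.adjoin_eq_span (R := ℂ) S
    have h2 : ((NonUnitalAlgebra.adjoin ℂ S).toSubmodule : Set (ℤ → ℤ → A)) =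
        (Submodule.span ℂ (Subsemigroup.closure S : Set (ℤ → ℤ → A)) :
          Set (ℤ → ℤ → A)) := by rw [this]
    rw [hclos] at h2
    exact h2
  rw [this]
end

section
/- For the product of spanning elements of J_δ and J_γ: [φ_{(m,n)}(a) − φ_{(m+1,n)}(γ(a))]·[φ_{(t,u)}(b) − φ_{(t,u+1)}(δ(b))] is zero unless m ≥ t and n ≤ u, in which case it equals [φ_{(m,u)}(c) − φ_{(m,u+1)}(δ(c))] − [φ_{(m+1,u)}(γ(c)) − φ_{(m+1,u+1)}(δ(γ(c)))] where c = δ_{u−n}(a)·γ_{m−t}(b); i.e., it is the function supported at the single point (m,u) with value c. -/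
variable {A : Type*} [NonUnitalNormedRing A] [StarRing A] [CStarRing A]
  [NormedSpace ℂ A] [IsScalarTower ℂ A A] [SMulCommClass ℂ A A] [StarModule ℂ A]
  [CompleteSpace A]

lemma keyA (α : ℕ × ℕ → (A →⋆ₙₐ[ℂ] A))
    (hα : ∀ x y : ℕ × ℕ, ∀ a : A, α (x + y) a = α x (α y a))
    (s1 s2 : ℤ) (a : A) (p : ℤ × ℤ) :
    (phi α (s1, s2) a - phi α (s1 + 1, s2) (α (1, 0) a)) p =
      if p.1 = s1 ∧ s2 ≤ p.2 then α (0, (p.2 - s2).toNat) a else 0 := by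
  simp only [Pi.sub_apply, phi]
  by_cases h1 : s1 ≤ p.1 ∧ s2 ≤ p.2
  · by_cases h2 : s1 + 1 ≤ p.1
    · rw [if_pos h1, if_pos ⟨h2, h1.2⟩, if_neg (by omega)]
      have e := hα ((p.1 - (s1 + 1)).toNat, (p.2 - s2).toNat) (1, 0) a
      have e1 : ((p.1 - (s1 + 1)).toNat, (p.2 - s2).toNat) + ((1 : ℕ), (0 : ℕ))
          = ((p.1 - s1).toNat, (p.2 - s2).toNat) := by
        simp [Prod.ext_iff]; omega
      rw [e1] at e
      rw [e, sub_self]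
    · have hp1 : (p.1 - s1).toNat = 0 := by omega
      rw [if_pos h1, if_neg (by omega), if_pos ⟨by omega, h1.2⟩, hp1, sub_zero]
  · rw [if_neg h1, if_neg (by omega), if_neg (by omega), sub_zero]

lemma keyB (α : ℕ × ℕ → (A →⋆ₙₐ[ℂ] A))
    (hα : ∀ x y : ℕ × ℕ, ∀ a : A, α (x + y) a = α x (α y a))
    (s1 s2 : ℤ) (a : A) (p : ℤ × ℤ) :
    (phi α (s1, s2) a - phi α (s1, s2 + 1) (α (0, 1) a)) p =
      if s1 ≤ p.1 ∧ p.2 = s2 then α ((p.1 - s1).toNat, 0) a else 0 := by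
  simp only [Pi.sub_apply, phi]
  by_cases h1 : s1 ≤ p.1 ∧ s2 ≤ p.2
  · by_cases h2 : s2 + 1 ≤ p.2
    · rw [if_pos h1, if_pos ⟨h1.1, h2⟩, if_neg (by omega)]
      have e := hα ((p.1 - s1).toNat, (p.2 - (s2 + 1)).toNat) (0, 1) a
      have e1 : ((p.1 - s1).toNat, (p.2 - (s2 + 1)).toNat) + ((0 : ℕ), (1 : ℕ))
          = ((p.1 - s1).toNat, (p.2 - s2).toNat) := by
        simp [Prod.ext_iff]; omega
      rw [e1] at e
      rw [e, sub_self]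
    · have hp2 : (p.2 - s2).toNat = 0 := by omega
      rw [if_pos h1, if_neg (by omega), if_pos ⟨h1.1, by omega⟩, hp2, sub_zero]
  · rw [if_neg h1, if_neg (by omega), if_neg (by omega), sub_zero]

lemma tele (α : ℕ × ℕ → (A →⋆ₙₐ[ℂ] A))
    (hα0 : ∀ a : A, α 0 a = a)
    (hα : ∀ x y : ℕ × ℕ, ∀ a : A, α (x + y) a = α x (α y a))
    (m u : ℤ) (c : A) :
    (phi α (m, u) c - phi α (m, u + 1) (α (0, 1) c)) -
      (phi α (m + 1, u) (α (1, 0) c) - phi α (m + 1, u + 1) (α (0, 1) (α (1, 0) c))) =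
    fun p : ℤ × ℤ => if p = (m, u) then c else 0 := by
  funext p
  rw [Pi.sub_apply, keyB α hα, keyB α hα]; simp only [Prod.ext_iff]
  by_cases h2 : p.2 = u
  · by_cases hm : p.1 = m
    · rw [if_pos ⟨hm.ge, h2⟩, if_neg (by omega), sub_zero, if_pos ⟨hm, h2⟩]
      have : ((p.1 - m).toNat, (0 : ℕ)) = (0 : ℕ × ℕ) := by
        simp [Prod.ext_iff]; omega
      rw [this, hα0]
    · by_cases hm' : m + 1 ≤ p.1
      · rw [if_pos ⟨by omega, h2⟩, if_pos ⟨hm', h2⟩, if_neg (by omega)]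
        have e := hα ((p.1 - (m + 1)).toNat, (0 : ℕ)) (1, 0) c
        have e1 : ((p.1 - (m + 1)).toNat, (0 : ℕ)) + ((1 : ℕ), (0 : ℕ))
            = ((p.1 - m).toNat, (0 : ℕ)) := by
          simp [Prod.ext_iff]; omega
        rw [e1] at e
        rw [e, sub_self]
      · rw [if_neg (by omega), if_neg (by omega), if_neg (by omega), sub_zero]
  · rw [if_neg (by omega), if_neg (by omega), if_neg (by omega), sub_zero]

/-- the product
`[φ_{(m,n)}(a) − φ_{(m+1,n)}(γ(a))]·[φ_{(t,u)}(b) − φ_{(t,u+1)}(δ(b))]`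
vanishes unless `m ≥ t` and `n ≤ u`, in which case it equals
`[φ_{(m,u)}(c) − φ_{(m,u+1)}(δ(c))] − [φ_{(m+1,u)}(γ(c)) − φ_{(m+1,u+1)}(δ(γ(c)))]`
with `c = δ_{u−n}(a)·γ_{m−t}(b)`, i.e. the function supported at `(m,u)` with
value `c`. -/
theorem stmt9 (α : ℕ × ℕ → (A →⋆ₙₐ[ℂ] A))
    (hα0 : ∀ a : A, α 0 a = a)
    (hα : ∀ x y : ℕ × ℕ, ∀ a : A, α (x + y) a = α x (α y a)) :
    ∀ (m n t u : ℤ) (a b : A),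
      (¬(t ≤ m ∧ n ≤ u) →
        (phi α (m, n) a - phi α (m + 1, n) (α (1, 0) a)) *
          (phi α (t, u) b - phi α (t, u + 1) (α (0, 1) b)) = 0) ∧
      ((t ≤ m ∧ n ≤ u) →
        (phi α (m, n) a - phi α (m + 1, n) (α (1, 0) a)) *
            (phi α (t, u) b - phi α (t, u + 1) (α (0, 1) b)) =
          (phi α (m, u) (α (0, (u - n).toNat) a * α ((m - t).toNat, 0) b) -
              phi α (m, u + 1) (α (0, 1) (α (0, (u - n).toNat) a * α ((m - t).toNat, 0) b))) -
            (phi α (m + 1, u) (α (1, 0) (α (0, (u - n).toNat) a * α ((m - t).toNat, 0) b)) -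
              phi α (m + 1, u + 1)
                (α (0, 1) (α (1, 0) (α (0, (u - n).toNat) a * α ((m - t).toNat, 0) b)))) ∧
        (phi α (m, n) a - phi α (m + 1, n) (α (1, 0) a)) *
            (phi α (t, u) b - phi α (t, u + 1) (α (0, 1) b)) =
          fun p : ℤ × ℤ => if p = (m, u) then
            α (0, (u - n).toNat) a * α ((m - t).toNat, 0) b else 0) := by
  intro m n t u a b
  have hprod : (phi α (m, n) a - phi α (m + 1, n) (α (1, 0) a)) *
      (phi α (t, u) b - phi α (t, u + 1) (α (0, 1) b)) =
      fun p : ℤ × ℤ => if p.1 = m ∧ p.2 = u ∧ t ≤ m ∧ n ≤ u then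
        α (0, (u - n).toNat) a * α ((m - t).toNat, 0) b else 0 := by
    funext p
    rw [Pi.mul_apply, keyA α hα, keyB α hα]
    by_cases h1 : p.1 = m ∧ n ≤ p.2
    · by_cases h2 : t ≤ p.1 ∧ p.2 = u
      · rw [if_pos h1, if_pos h2, if_pos ⟨h1.1, h2.2, by omega, by omega⟩, h1.1, h2.2]
      · rw [if_neg h2, mul_zero, if_neg (by omega)]
    · rw [if_neg h1, zero_mul, if_neg (by omega)]
  refine ⟨fun h => ?_, fun h => ?_⟩
  · rw [hprod]
    funext p
    rw [if_neg (by omega)]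
    rfl
  · have h3 : (phi α (m, n) a - phi α (m + 1, n) (α (1, 0) a)) *
        (phi α (t, u) b - phi α (t, u + 1) (α (0, 1) b)) =
        fun p : ℤ × ℤ => if p = (m, u) then
          α (0, (u - n).toNat) a * α ((m - t).toNat, 0) b else 0 := by
      rw [hprod]
      funext p
      simp only [Prod.ext_iff]
      by_cases hp : p.1 = m ∧ p.2 = u
      · rw [if_pos ⟨hp.1, hp.2, h.1, h.2⟩, if_pos hp]
      · rw [if_neg (by omega), if_neg (by omega)]
    exact ⟨h3.trans (tele α hα0 hα m u _).symm, h3⟩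
end

section
/- Let (A ⋊_α G, i_A, i_G) be the full crossed product of a C*-dynamical system (A, G, α) with G a discrete group, and let I, J be α-invariant closed two-sided ideals of A. Then (I ⋊_α G) + (J ⋊_α G) = (I + J) ⋊_α G and (I ⋊_α G) ∩ (J ⋊_α G) = (I ∩ J) ⋊_α G as ideals of A ⋊_α G. -/
/- An abstract model of the full crossed product `A ⋊_α G` of a C*-dynamical
system `(A, G, α)` with `G` discrete: a C*-algebra `C` together with the
generator map `gen a g = i_A(a) i_G(g)`, subject to the covariance relations,
density of the span of the generators, and the universal property. -/

universe u v w

structure CrossedProduct (A : Type v) [NonUnitalNormedRing A] [StarRing A]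
    [CStarRing A] [NormedSpace ℂ A] [CompleteSpace A]
    (G : Type w) [Group G] (α : G → (A ≃⋆ₐ[ℂ] A)) : Type (max (u + 1) v w) where
  C : Type u
  [nring : NonUnitalNormedRing C]
  [nstar : StarRing C]
  [ncstar : CStarRing C]
  [nspace : NormedSpace ℂ C]
  [ncomplete : CompleteSpace C]
  [nscomm : SMulCommClass ℂ C C]
  [ntower : IsScalarTower ℂ C C]
  [nstarmod : StarModule ℂ C]
  gen : A → G → C
  gen_add : ∀ (a b : A) (g : G), gen (a + b) g = gen a g + gen b g
  gen_smul : ∀ (c : ℂ) (a : A) (g : G), gen (c • a) g = c • gen a g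
  gen_mul : ∀ (a b : A) (g h : G), gen a g * gen b h = gen (a * (α g) b) (g * h)
  gen_star : ∀ (a : A) (g : G), star (gen a g) = gen ((α g⁻¹) (star a)) g⁻¹
  spanning : (Submodule.span ℂ
    (Set.range fun p : A × G => gen p.1 p.2)).topologicalClosure = ⊤
  universal : ∀ (D : Type u) [NonUnitalNormedRing D] [StarRing D] [CStarRing D]
    [NormedSpace ℂ D] [CompleteSpace D] [SMulCommClass ℂ D D] [IsScalarTower ℂ D D]
    [StarModule ℂ D] (genD : A → G → D),
    (∀ (a b : A) (g : G), genD (a + b) g = genD a g + genD b g) →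
    (∀ (c : ℂ) (a : A) (g : G), genD (c • a) g = c • genD a g) →
    (∀ (a b : A) (g h : G), genD a g * genD b h = genD (a * (α g) b) (g * h)) →
    (∀ (a : A) (g : G), star (genD a g) = genD ((α g⁻¹) (star a)) g⁻¹) →
    ∃ Φ : C →⋆ₙₐ[ℂ] D, ∀ (a : A) (g : G), Φ (gen a g) = genD a g

attribute [instance] CrossedProduct.nring CrossedProduct.nstar CrossedProduct.ncstar
  CrossedProduct.nspace CrossedProduct.ncomplete CrossedProduct.nscomm
  CrossedProduct.ntower CrossedProduct.nstarmod

variable {A : Type v} [NonUnitalNormedRing A] [StarRing A] [CStarRing A]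
  [NormedSpace ℂ A] [CompleteSpace A]
  {G : Type w} [Group G]

/-- The ideal `K ⋊_α G`: the closed span of `{i_A(k) i_G(g) : k ∈ K, g ∈ G}`. -/
noncomputable def idealCP {α : G → (A ≃⋆ₐ[ℂ] A)} (E : CrossedProduct.{u} A G α)
    (K : TwoSidedIdeal A) : Submodule ℂ E.C :=
  (Submodule.span ℂ {x : E.C | ∃ a ∈ K, ∃ g : G, x = E.gen a g}).topologicalClosure

/-! For the sum, `(I ⊔ J) ⋊ G` is the closed span of generators lying in `I ⋊ G + J ⋊ G`, so it
suffices that this sum is closed. The covariance relation makes `I ⋊ G` a closed right ideal and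
`J ⋊ G` a closed left ideal of the C*-algebra `A ⋊ G`. In a C*-algebra such a sum `M + N` is
closed: a local approximate unit `e ∈ M` for `m ∈ M` turns `n ∈ N` into `e n ∈ M ∩ N` with
`‖n - e n‖ ≲ ‖n - m‖`, so `N → C / M` has lifts of controlled norm and hence closed range.
For the intersection, every `x ∈ M ∩ N` is a limit of products `e x` with `e ∈ M`, and
`(I ⋊ G) (J ⋊ G) ⊆ (I ∩ J) ⋊ G`, again by covariance. -/

open Metric Unitization

lemma AddSubgroup.isClosed_sup_of_infDist_inf_le {E : Type*} [NormedAddCommGroup E]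
    [CompleteSpace E] {M N : AddSubgroup E} (hM : IsClosed (M : Set E))
    (hN : IsClosed (N : Set E)) (h : ∀ n ∈ N, infDist n (M ⊓ N : AddSubgroup E) ≤ infDist n M) :
    IsClosed ((M ⊔ N : AddSubgroup E) : Set E) := by
  have := hM -- makes `E ⧸ M` a normed group
  have : CompleteSpace N := hN.completeSpace_coe
  let f : NormedAddGroupHom N (E ⧸ M) := M.normedMk.comp (NormedAddGroupHom.incl N)
  let K : AddSubgroup (E ⧸ M) := N.map (QuotientAddGroup.mk' M)
  have hK : f.SurjectiveOnWith K 2 := by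
    rintro _ ⟨n, hn, rfl⟩
    rw [QuotientAddGroup.mk'_apply, QuotientAddGroup.norm_mk]
    obtain h0 | hpos := (infDist_nonneg : 0 ≤ infDist n M).eq_or_lt
    · refine ⟨0, ?_, by rw [norm_zero, ← h0, mul_zero]⟩
      rw [map_zero, eq_comm, QuotientAddGroup.eq_zero_iff,
        ← QuotientAddGroup.norm_mk_eq_zero, QuotientAddGroup.norm_mk, ← h0]
    · have hlt : infDist n M < 2 * infDist n M := by linarith
      obtain ⟨z, ⟨hzM, hzN⟩, hnz⟩ := (infDist_lt_iff ⟨0, zero_mem _⟩).mp ((h n hn).trans_lt hlt)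
      refine ⟨⟨n - z, N.sub_mem hn hzN⟩, by simpa [f] using hzM, ?_⟩
      simpa [dist_eq_norm] using hnz.le
  have hKclosed : IsClosed (K : Set (E ⧸ M)) := by
    refine isClosed_of_closure_subset fun y hy => ?_
    obtain ⟨g, rfl, -⟩ := controlled_closure_of_complete two_pos one_pos hK y hy
    exact ⟨g, g.2, rfl⟩
  rw [← QuotientAddGroup.comap_map_mk' M N]
  exact hKclosed.preimage QuotientAddGroup.continuous_mk

section CStarAlgebra

lemma one_sub_mul_cfc_inv_add_eq {B : Type*} [CStarAlgebra B] {a : B} (ha : IsSelfAdjoint a)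
    {δ : ℝ} (hpos : ∀ t ∈ spectrum ℝ a, 0 < t + δ) :
    1 - a * cfc (fun t : ℝ => (t + δ)⁻¹) a = cfc (fun t : ℝ => δ * (t + δ)⁻¹) a := by
  have hinv : ContinuousOn (fun t : ℝ => (t + δ)⁻¹) (spectrum ℝ a) :=
    (continuousOn_id.add continuousOn_const).inv₀ fun t ht => (hpos t ht).ne'
  rw [cfc_congr (a := a) (f := fun t => δ * (t + δ)⁻¹) (g := fun t => 1 - t * (t + δ)⁻¹)
      fun t ht => ?_,
    cfc_sub (fun _ => 1) (fun t => t * (t + δ)⁻¹) a continuousOn_const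
      (continuousOn_id.mul hinv), cfc_const_one ℝ a,
    cfc_mul (fun t => t) _ a continuousOn_id hinv, cfc_id' ℝ a]
  have := (hpos t ht).ne'
  field_simp
  ring

/-- With `u = (m m* + δ)⁻¹` and `δ = ε²`, the element `1 - m m* u = δ u` is a contraction and
`‖(1 - m m* u) m‖² = ‖δ² u m m* u‖ ≤ sup_{t ≥ 0} δ² t / (t + δ)² ≤ δ`. -/
lemma exists_norm_one_sub_mul_le {B : Type*} [CStarAlgebra B] (m : B) {ε : ℝ} (hε : 0 < ε) :
    ∃ u : B, ‖1 - m * star m * u‖ ≤ 1 ∧ ‖(1 - m * star m * u) * m‖ ≤ ε := by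
  set a := m * star m with ha_def
  have hσ : ∀ t ∈ spectrum ℝ a, 0 ≤ t := fun t ht =>
    spectrum_star_mul_self_nonneg (b := star m) t (by rwa [star_star])
  set δ := ε ^ 2
  have hδ : 0 < δ := by positivity
  have hpos : ∀ t ∈ spectrum ℝ a, 0 < t + δ := fun t ht => by linarith [hσ t ht]
  set f : ℝ → ℝ := fun t => δ * (t + δ)⁻¹
  have hf : ContinuousOn f (spectrum ℝ a) := continuousOn_const.mul <|
    (continuousOn_id.add continuousOn_const).inv₀ fun t ht => (hpos t ht).ne'
  have hf_bounds : ∀ t ∈ spectrum ℝ a, 0 ≤ f t ∧ f t ≤ 1 ∧ f t * t * f t ≤ δ := by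
    intro t ht
    have h1 : (t + δ) * (t + δ)⁻¹ = 1 := mul_inv_cancel₀ (hpos t ht).ne'
    have h2 : 0 < (t + δ)⁻¹ := inv_pos.mpr (hpos t ht)
    have := hσ t ht
    have h3 : t * (t + δ)⁻¹ ≤ 1 := by nlinarith
    have h4 : f t ≤ 1 := by simp only [f]; nlinarith
    refine ⟨by positivity, h4, ?_⟩
    calc f t * t * f t = δ * (t * (t + δ)⁻¹) * f t := by simp only [f]; ring
      _ ≤ δ * 1 * 1 := by gcongr
      _ = δ := by ring
  refine ⟨cfc (fun t : ℝ => (t + δ)⁻¹) a, ?_, ?_⟩ <;>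
    rw [one_sub_mul_cfc_inv_add_eq (.mul_star_self m) hpos]
  · refine norm_cfc_le zero_le_one fun t ht => ?_
    obtain ⟨h0, h1, -⟩ := hf_bounds t ht
    rwa [Real.norm_eq_abs, abs_of_nonneg h0]
  · have hconj : cfc f a * m * star (cfc f a * m) = cfc (fun t => f t * t * f t) a := by
      rw [star_mul, (cfc_predicate f a).star_eq, ← mul_assoc, mul_assoc _ m, ← ha_def,
        cfc_mul (fun t => f t * t) f a (hf.mul continuousOn_id) hf,
        cfc_mul f (fun t => t) a hf continuousOn_id, cfc_id' ℝ a]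
    have hsq : ‖cfc f a * m‖ ^ 2 ≤ ε ^ 2 := by
      rw [sq, ← CStarRing.norm_self_mul_star, hconj]
      refine norm_cfc_le hδ.le fun t ht => ?_
      obtain ⟨h0, -, h2⟩ := hf_bounds t ht
      rwa [Real.norm_eq_abs, abs_of_nonneg (by have := hσ t ht; positivity)]
    exact (pow_le_pow_iff_left₀ (norm_nonneg _) hε.le two_ne_zero).mp hsq

variable {C : Type*} [NonUnitalCStarAlgebra C]

/-- The unit `e = m m* u` is built in the unitization; it lies in `M` because it is a right
multiple of `m m*`. -/
lemma exists_mem_norm_sub_mul_le {M : Submodule ℂ C} (hM : ∀ x, ∀ y ∈ M, y * x ∈ M)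
    {m : C} (hm : m ∈ M) {ε : ℝ} (hε : 0 < ε) :
    ∃ e ∈ M, ‖m - e * m‖ ≤ ε ∧ ∀ z, ‖z - e * z‖ ≤ ‖z‖ := by
  obtain ⟨u, hu, hum⟩ := exists_norm_one_sub_mul_le (m : Unitization ℂ C) hε
  set e := u.fst • (m * star m) + m * star m * u.snd
  have he : ∀ z : C, ((z - e * z : C) : Unitization ℂ C) =
      (1 - m * star (m : Unitization ℂ C) * u) * z := by
    intro z
    rw [← inr_star, ← inr_mul, sub_mul, one_mul, inr_sub, inr_mul]
    congr 2
    ext <;> simp [e, mul_comm]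
  refine ⟨e, M.add_mem (M.smul_mem _ (hM _ m hm)) (hM _ _ (hM _ m hm)), ?_, fun z => ?_⟩
  · rw [← norm_inr (𝕜 := ℂ), he]
    exact hum
  · rw [← norm_inr (𝕜 := ℂ), he, ← norm_inr (𝕜 := ℂ) z]
    exact (norm_mul_le _ _).trans (mul_le_of_le_one_left (norm_nonneg _) hu)

lemma infDist_inf_le_infDist {M N : Submodule ℂ C} (hM : ∀ x, ∀ y ∈ M, y * x ∈ M)
    (hN : ∀ x, ∀ y ∈ N, x * y ∈ N) {n : C} (hn : n ∈ N) :
    infDist n (M ⊓ N : Submodule ℂ C) ≤ infDist n M := by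
  refine (le_infDist ⟨0, M.zero_mem⟩).mpr fun m hm => le_of_forall_pos_le_add fun ε hε => ?_
  obtain ⟨e, heM, hem, he⟩ := exists_mem_norm_sub_mul_le hM hm hε
  have hen : e * n ∈ M ⊓ N := ⟨hM n e heM, hN e n hn⟩
  calc infDist n (M ⊓ N : Submodule ℂ C) ≤ ‖n - e * n‖ :=
        (infDist_le_dist_of_mem hen).trans_eq (dist_eq_norm _ _)
    _ = ‖((n - m) - e * (n - m)) + (m - e * m)‖ := by noncomm_ring
    _ ≤ dist n m + ε := by
      rw [dist_eq_norm]
      exact (norm_add_le _ _).trans (add_le_add (he _) hem)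

lemma isClosed_sup_of_mul_mem {M N : Submodule ℂ C} (hMc : IsClosed (M : Set C))
    (hNc : IsClosed (N : Set C)) (hM : ∀ x, ∀ y ∈ M, y * x ∈ M) (hN : ∀ x, ∀ y ∈ N, x * y ∈ N) :
    IsClosed ((M ⊔ N : Submodule ℂ C) : Set C) := by
  rw [← Submodule.coe_toAddSubgroup, Submodule.sup_toAddSubgroup]
  exact AddSubgroup.isClosed_sup_of_infDist_inf_le hMc hNc fun n hn =>
    infDist_inf_le_infDist hM hN hn

lemma inf_le_of_mul_mem {M N R : Submodule ℂ C} (hM : ∀ x, ∀ y ∈ M, y * x ∈ M)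
    (hR : IsClosed (R : Set C)) (hMN : ∀ m ∈ M, ∀ n ∈ N, m * n ∈ R) : M ⊓ N ≤ R := by
  rintro x ⟨hxM, hxN⟩
  rw [← SetLike.mem_coe, ← hR.closure_eq, Metric.mem_closure_iff]
  intro ε hε
  obtain ⟨e, heM, hex, -⟩ := exists_mem_norm_sub_mul_le hM hxM (half_pos hε)
  exact ⟨e * x, hMN e heM x hxN, by rw [dist_eq_norm]; linarith⟩

end CStarAlgebra

namespace CrossedProduct

variable {α : G → (A ≃⋆ₐ[ℂ] A)} (E : CrossedProduct.{u} A G α)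

noncomputable instance : NonUnitalCStarAlgebra E.C where

lemma isClosed_idealCP (K : TwoSidedIdeal A) : IsClosed (idealCP E K : Set E.C) :=
  Submodule.isClosed_topologicalClosure _

lemma gen_mem_idealCP {K : TwoSidedIdeal A} {a : A} (ha : a ∈ K) (g : G) :
    E.gen a g ∈ idealCP E K :=
  Submodule.le_topologicalClosure _ (Submodule.subset_span ⟨a, ha, g, rfl⟩)

lemma idealCP_le {K : TwoSidedIdeal A} {P : Submodule ℂ E.C} (hP : IsClosed (P : Set E.C))
    (h : ∀ a ∈ K, ∀ g, E.gen a g ∈ P) : idealCP E K ≤ P :=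
  Submodule.topologicalClosure_minimal _
    (Submodule.span_le.mpr fun _ ⟨a, ha, g, hx⟩ => hx ▸ h a ha g) hP

lemma eq_top_of_gen_mem {P : Submodule ℂ E.C} (hP : IsClosed (P : Set E.C))
    (h : ∀ a g, E.gen a g ∈ P) : P = ⊤ :=
  top_le_iff.mp <| E.spanning ▸ Submodule.topologicalClosure_minimal _
    (Submodule.span_le.mpr fun _ ⟨⟨a, g⟩, hx⟩ => hx ▸ h a g) hP

lemma idealCP_mono {K K' : TwoSidedIdeal A} (h : K ≤ K') : idealCP E K ≤ idealCP E K' :=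
  E.idealCP_le (E.isClosed_idealCP K') fun _ ha g => E.gen_mem_idealCP (h ha) g

lemma mul_mem_idealCP_right {K : TwoSidedIdeal A} (x : E.C) {y : E.C}
    (hy : y ∈ idealCP E K) : y * x ∈ idealCP E K := by
  have hgen : ∀ b h, idealCP E K ≤ (idealCP E K).comap (LinearMap.mulRight ℂ (E.gen b h)) :=
    fun b h => E.idealCP_le ((E.isClosed_idealCP K).preimage (continuous_mul_const _))
      fun a ha g => by
        simpa [E.gen_mul] using E.gen_mem_idealCP (K.mul_mem_right a (α g b) ha) (g * h)
  have := E.eq_top_of_gen_mem (P := (idealCP E K).comap (LinearMap.mulLeft ℂ y))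
    ((E.isClosed_idealCP K).preimage (continuous_const_mul y)) fun b h => hgen b h hy
  exact (Submodule.eq_top_iff'.mp this) x

lemma mul_mem_idealCP_left {K : TwoSidedIdeal A} (hK : ∀ (g : G) (a : A), a ∈ K → α g a ∈ K)
    (x : E.C) {y : E.C} (hy : y ∈ idealCP E K) : x * y ∈ idealCP E K := by
  have hgen : ∀ b h, idealCP E K ≤ (idealCP E K).comap (LinearMap.mulLeft ℂ (E.gen b h)) :=
    fun b h => E.idealCP_le ((E.isClosed_idealCP K).preimage (continuous_const_mul _))
      fun a ha g => by
        simpa [E.gen_mul] using E.gen_mem_idealCP (K.mul_mem_left b _ (hK h a ha)) (h * g)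
  have := E.eq_top_of_gen_mem (P := (idealCP E K).comap (LinearMap.mulRight ℂ y))
    ((E.isClosed_idealCP K).preimage (continuous_mul_const y)) fun b h => hgen b h hy
  exact (Submodule.eq_top_iff'.mp this) x

lemma mul_mem_idealCP_inf {I J : TwoSidedIdeal A} (hJ : ∀ (g : G) (a : A), a ∈ J → α g a ∈ J)
    {p q : E.C} (hp : p ∈ idealCP E I) (hq : q ∈ idealCP E J) : p * q ∈ idealCP E (I ⊓ J) := by
  have hclosed := E.isClosed_idealCP (I ⊓ J)
  have hgen : ∀ b ∈ J, ∀ h,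
      idealCP E I ≤ (idealCP E (I ⊓ J)).comap (LinearMap.mulRight ℂ (E.gen b h)) :=
    fun b hb h => E.idealCP_le (hclosed.preimage (continuous_mul_const _)) fun a ha g => by
      simpa [E.gen_mul] using E.gen_mem_idealCP (K := I ⊓ J)
        ⟨I.mul_mem_right a _ ha, J.mul_mem_left a _ (hJ g b hb)⟩ (g * h)
  exact E.idealCP_le (P := (idealCP E (I ⊓ J)).comap (LinearMap.mulLeft ℂ p))
    (hclosed.preimage (continuous_const_mul p)) (fun b hb h => hgen b hb h hp) hq

end CrossedProduct

theorem stmt10_general (α : G → (A ≃⋆ₐ[ℂ] A))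
    (E : CrossedProduct.{u} A G α)
    (I J : TwoSidedIdeal A)
    (hJinv : ∀ (g : G) (a : A), a ∈ J → α g a ∈ J) :
    idealCP E I ⊔ idealCP E J = idealCP E (I ⊔ J) ∧
    idealCP E I ⊓ idealCP E J = idealCP E (I ⊓ J) := by
  constructor
  · refine le_antisymm (sup_le (E.idealCP_mono le_sup_left) (E.idealCP_mono le_sup_right)) ?_
    refine E.idealCP_le (isClosed_sup_of_mul_mem (E.isClosed_idealCP I) (E.isClosed_idealCP J)
      (fun x _ => E.mul_mem_idealCP_right x) (fun x _ => E.mul_mem_idealCP_left hJinv x))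
      fun a ha g => ?_
    obtain ⟨i, hi, j, hj, rfl⟩ := TwoSidedIdeal.mem_sup.mp ha
    rw [E.gen_add]
    exact Submodule.add_mem_sup (E.gen_mem_idealCP hi g) (E.gen_mem_idealCP hj g)
  · exact le_antisymm
      (inf_le_of_mul_mem (fun x _ => E.mul_mem_idealCP_right x) (E.isClosed_idealCP _)
        fun _ hp _ hq => E.mul_mem_idealCP_inf hJinv hp hq)
      (le_inf (E.idealCP_mono inf_le_left) (E.idealCP_mono inf_le_right))

/-- for α-invariant closed two-sided ideals `I, J` of `A`,
`(I ⋊_α G) + (J ⋊_α G) = (I + J) ⋊_α G` and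
`(I ⋊_α G) ∩ (J ⋊_α G) = (I ∩ J) ⋊_α G`. -/
theorem stmt10 (α : G → (A ≃⋆ₐ[ℂ] A))
    (hα1 : ∀ a : A, α 1 a = a)
    (hαmul : ∀ (g h : G) (a : A), α (g * h) a = α g (α h a))
    (E : CrossedProduct.{u} A G α)
    (I J : TwoSidedIdeal A)
    (hIclosed : IsClosed (I : Set A)) (hJclosed : IsClosed (J : Set A))
    (hIinv : ∀ (g : G) (a : A), a ∈ I → α g a ∈ I)
    (hJinv : ∀ (g : G) (a : A), a ∈ J → α g a ∈ J) :
    idealCP E I ⊔ idealCP E J = idealCP E (I ⊔ J) ∧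
    idealCP E I ⊓ idealCP E J = idealCP E (I ⊓ J) :=
  stmt10_general α E I J hJinv
end

section
/- In the partial-isometric crossed product (A ×_α^piso ℕ², i_A, i_{ℕ²}), writing P_{(1,0)} = 1 − i_{ℕ²}(1,0)* i_{ℕ²}(1,0) and P_{(0,1)} = 1 − i_{ℕ²}(0,1)* i_{ℕ²}(0,1), one has the identity P_{(1,0)} − i_{ℕ²}(0,1)* P_{(1,0)} i_{ℕ²}(0,1) = P_{(0,1)} − i_{ℕ²}(1,0)* P_{(0,1)} i_{ℕ²}(1,0). -/
/-- in (the multiplier algebra of) the partial-isometric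
crossed product, with `V = i_{ℕ²}` a Nica partial-isometric representation of
`ℕ²` and `P_{(1,0)} = 1 − V(1,0)* V(1,0)`, `P_{(0,1)} = 1 − V(0,1)* V(0,1)`:
`P_{(1,0)} − V(0,1)* P_{(1,0)} V(0,1) = P_{(0,1)} − V(1,0)* P_{(0,1)} V(1,0)`. -/
theorem stmt12 {M : Type*} [NormedRing M] [StarRing M] [CStarRing M]
    [NormedAlgebra ℂ M] [CompleteSpace M] [StarModule ℂ M]
    (V : ℕ × ℕ → M)
    (hpartial : ∀ x : ℕ × ℕ, V x * star (V x) * V x = V x)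
    (hsemigroup : ∀ x y : ℕ × ℕ, V x * V y = V (x + y))
    (hnica : ∀ x y : ℕ × ℕ,
      star (V x) * V x * (star (V y) * V y) = star (V (x ⊔ y)) * V (x ⊔ y)) :
    (1 - star (V (1, 0)) * V (1, 0)) -
        star (V (0, 1)) * (1 - star (V (1, 0)) * V (1, 0)) * V (0, 1) =
      (1 - star (V (0, 1)) * V (0, 1)) -
        star (V (1, 0)) * (1 - star (V (0, 1)) * V (0, 1)) * V (1, 0) := by
  have key1 : star (V (0, 1)) * (star (V (1, 0)) * V (1, 0)) * V (0, 1)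
      = star (V (1, 1)) * V (1, 1) := by
    have h : V (1, 0) * V (0, 1) = V (1, 1) := hsemigroup _ _
    calc star (V (0, 1)) * (star (V (1, 0)) * V (1, 0)) * V (0, 1)
        = star (V (1, 0) * V (0, 1)) * (V (1, 0) * V (0, 1)) := by
          simp [star_mul]; noncomm_ring
      _ = star (V (1, 1)) * V (1, 1) := by rw [h]
  have key2 : star (V (1, 0)) * (star (V (0, 1)) * V (0, 1)) * V (1, 0)
      = star (V (1, 1)) * V (1, 1) := by
    have h : V (0, 1) * V (1, 0) = V (1, 1) := hsemigroup _ _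
    calc star (V (1, 0)) * (star (V (0, 1)) * V (0, 1)) * V (1, 0)
        = star (V (0, 1) * V (1, 0)) * (V (0, 1) * V (1, 0)) := by
          simp [star_mul]; noncomm_ring
      _ = star (V (1, 1)) * V (1, 1) := by rw [h]
  have e1 : star (V (0, 1)) * (1 - star (V (1, 0)) * V (1, 0)) * V (0, 1)
      = star (V (0, 1)) * V (0, 1) - star (V (1, 1)) * V (1, 1) := by
    rw [← key1]; noncomm_ring
  have e2 : star (V (1, 0)) * (1 - star (V (0, 1)) * V (0, 1)) * V (1, 0)
      = star (V (1, 0)) * V (1, 0) - star (V (1, 1)) * V (1, 1) := by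
    rw [← key2]; noncomm_ring
  rw [e1, e2]; noncomm_ring
end

section
/- With ξ_{(m,n)}^{(x,y)}(a) = i_{ℕ²}(m,n)* i_A(a) [1 − i_{ℕ²}(1,0)* i_{ℕ²}(1,0)] i_{ℕ²}(x,y) and η_{(m,n)}^{(x,y)}(a) = i_{ℕ²}(m,n)* i_A(a) [1 − i_{ℕ²}(0,1)* i_{ℕ²}(0,1)] i_{ℕ²}(x,y), one has ξ_{(m,n)}^{(x,y)}(a) − ξ_{(m,n+1)}^{(x,y+1)}(δ(a)) = η_{(m,n)}^{(x,y)}(a) − η_{(m+1,n)}^{(x+1,y)}(γ(a)) for all a ∈ A and m, n, x, y ∈ ℕ. -/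
/-- in the partial-isometric crossed product of `(A, ℕ², α)`
(realised inside a unital C*-algebra `M` via a covariant partial-isometric pair
`(i_A, V)`), with
`ξ_{(m,n)}^{(x,y)}(a) = V(m,n)* i_A(a) (1 − V(1,0)* V(1,0)) V(x,y)` and
`η_{(m,n)}^{(x,y)}(a) = V(m,n)* i_A(a) (1 − V(0,1)* V(0,1)) V(x,y)`, one has
`ξ_{(m,n)}^{(x,y)}(a) − ξ_{(m,n+1)}^{(x,y+1)}(δ(a)) = η_{(m,n)}^{(x,y)}(a) − η_{(m+1,n)}^{(x+1,y)}(γ(a))`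
where `δ = α_{(0,1)}` and `γ = α_{(1,0)}`. -/
theorem stmt13 {A : Type*} [NonUnitalNormedRing A] [StarRing A] [CStarRing A]
    [NormedSpace ℂ A] [IsScalarTower ℂ A A] [SMulCommClass ℂ A A] [StarModule ℂ A]
    [CompleteSpace A]
    {M : Type*} [NormedRing M] [StarRing M] [CStarRing M]
    [NormedAlgebra ℂ M] [CompleteSpace M] [StarModule ℂ M]
    (α : ℕ × ℕ → (A →⋆ₙₐ[ℂ] A))
    (hα0 : ∀ a : A, α 0 a = a)
    (hαadd : ∀ x y : ℕ × ℕ, ∀ a : A, α (x + y) a = α x (α y a))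
    (iA : A →⋆ₙₐ[ℂ] M) (V : ℕ × ℕ → M)
    (hpartial : ∀ x : ℕ × ℕ, V x * star (V x) * V x = V x)
    (hsemigroup : ∀ x y : ℕ × ℕ, V x * V y = V (x + y))
    (hnica : ∀ x y : ℕ × ℕ,
      star (V x) * V x * (star (V y) * V y) = star (V (x ⊔ y)) * V (x ⊔ y))
    (hcov : ∀ (x : ℕ × ℕ) (a : A), iA (α x a) * V x = V x * iA a)
    (hcomm : ∀ (x : ℕ × ℕ) (a : A),
      star (V x) * V x * iA a = iA a * (star (V x) * V x)) :
    ∀ (m n x y : ℕ) (a : A),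
      star (V (m, n)) * iA a * (1 - star (V (1, 0)) * V (1, 0)) * V (x, y) -
          star (V (m, n + 1)) * iA (α (0, 1) a) *
            (1 - star (V (1, 0)) * V (1, 0)) * V (x, y + 1) =
        star (V (m, n)) * iA a * (1 - star (V (0, 1)) * V (0, 1)) * V (x, y) -
          star (V (m + 1, n)) * iA (α (1, 0) a) *
            (1 - star (V (0, 1)) * V (0, 1)) * V (x + 1, y) := by
  -- adjoint form of the covariance relation
  have cov' : ∀ (z : ℕ × ℕ) (b : A), star (V z) * iA (α z b) = iA b * star (V z) := by
    intro z b
    have h := congrArg star (hcov z (star b))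
    simpa [star_mul, map_star] using h
  have cov2 : ∀ (z : ℕ × ℕ) (b : A) (c : M),
      star (V z) * (iA (α z b) * c) = iA b * (star (V z) * c) := by
    intro z b c
    rw [← mul_assoc, cov', mul_assoc]
  intro m n x y a
  have hm : star (V (m, n + 1)) = star (V (m, n)) * star (V (0, 1)) := by
    have h := hsemigroup (0, 1) (m, n)
    have h2 : ((0 : ℕ), (1 : ℕ)) + (m, n) = (m, n + 1) := by
      simp [Prod.ext_iff, Nat.add_comm]
    rw [h2] at h
    rw [← h, star_mul]
  have hx : V (x, y + 1) = V (0, 1) * V (x, y) := by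
    have h := hsemigroup (0, 1) (x, y)
    have h2 : ((0 : ℕ), (1 : ℕ)) + (x, y) = (x, y + 1) := by
      simp [Prod.ext_iff, Nat.add_comm]
    rw [h2] at h
    exact h.symm
  have hm' : star (V (m + 1, n)) = star (V (m, n)) * star (V (1, 0)) := by
    have h := hsemigroup (1, 0) (m, n)
    have h2 : ((1 : ℕ), (0 : ℕ)) + (m, n) = (m + 1, n) := by
      simp [Prod.ext_iff, Nat.add_comm]
    rw [h2] at h
    rw [← h, star_mul]
  have hx' : V (x + 1, y) = V (1, 0) * V (x, y) := by
    have h := hsemigroup (1, 0) (x, y)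
    have h2 : ((1 : ℕ), (0 : ℕ)) + (x, y) = (x + 1, y) := by
      simp [Prod.ext_iff, Nat.add_comm]
    rw [h2] at h
    exact h.symm
  have h11a : V (1, 0) * V (0, 1) = V (1, 1) := by
    have h := hsemigroup (1, 0) (0, 1)
    simpa using h
  have h11b : V (0, 1) * V (1, 0) = V (1, 1) := by
    have h := hsemigroup (0, 1) (1, 0)
    simpa using h
  set t := V (x, y) with ht
  have e1 : star (V (0, 1)) * (star (V (1, 0)) * (V (1, 0) * (V (0, 1) * t)))
      = star (V (1, 1)) * (V (1, 1) * t) := by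
    calc star (V (0, 1)) * (star (V (1, 0)) * (V (1, 0) * (V (0, 1) * t)))
        = (star (V (0, 1)) * star (V (1, 0))) * ((V (1, 0) * V (0, 1)) * t) := by
          simp only [mul_assoc]
      _ = star (V (1, 1)) * (V (1, 1) * t) := by
          rw [← star_mul, h11a]
  have e2 : star (V (1, 0)) * (star (V (0, 1)) * (V (0, 1) * (V (1, 0) * t)))
      = star (V (1, 1)) * (V (1, 1) * t) := by
    calc star (V (1, 0)) * (star (V (0, 1)) * (V (0, 1) * (V (1, 0) * t)))
        = (star (V (1, 0)) * star (V (0, 1))) * ((V (0, 1) * V (1, 0)) * t) := by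
          simp only [mul_assoc]
      _ = star (V (1, 1)) * (V (1, 1) * t) := by
          rw [← star_mul, h11b]
  have core :
      (1 - star (V (1, 0)) * V (1, 0)) * t
          - star (V (0, 1)) * ((1 - star (V (1, 0)) * V (1, 0)) * (V (0, 1) * t))
      = (1 - star (V (0, 1)) * V (0, 1)) * t
          - star (V (1, 0)) * ((1 - star (V (0, 1)) * V (0, 1)) * (V (1, 0) * t)) := by
    simp only [sub_mul, mul_sub, one_mul, mul_assoc]
    rw [e1, e2]
    abel
  rw [hm, hx, hm', hx']
  simp only [mul_assoc]
  simp only [cov2]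
  rw [← mul_sub, ← mul_sub, ← mul_sub, ← mul_sub, core]
end
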